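/- Let Δ be a convex union representable simplicial complex with n ≥ 1 vertices and vertex set [n] = {1,…,n}. Then the Alexander dual Δ* = {σ ⊆ [n] : [n]∖σ ∉ Δ} is collapsible. -/

import Mathlib

open Set

/-- An abstract simplicial complex on ground set `V`: a collection of finite
subsets of `V` that is closed under inclusion. -/
def IsSimplicialComplex {V : Type*} (Δ : Set (Finset V)) : Prop :=
  ∀ σ ∈ Δ, ∀ τ : Finset V, τ ⊆ σ → τ ∈ Δ

/-- The nerve of a collection of sets `U i`: the faces are the finite sets `σ`
of indices such that `⋂ i ∈ σ, U i ≠ ∅`, where by convention the empty face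
belongs to the nerve iff some `U i` is nonempty. -/
def nerveOf {V E : Type*} (U : V → Set E) : Set (Finset V) :=
  {σ | (∃ i, (U i).Nonempty) ∧ ∃ x, ∀ i ∈ σ, x ∈ U i}

/-- A facet of `Δ` is an inclusion-maximal face. -/
def IsFacet {V : Type*} (Δ : Set (Finset V)) (σ : Finset V) : Prop :=
  σ ∈ Δ ∧ ∀ τ ∈ Δ, σ ⊆ τ → τ = σ

/-- A free face of `Δ`: a face that is not a facet and is contained in a
unique facet. -/
def IsFreeFace {V : Type*} (Δ : Set (Finset V)) (σ : Finset V) : Prop :=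
  σ ∈ Δ ∧ ¬ IsFacet Δ σ ∧ ∃! τ : Finset V, IsFacet Δ τ ∧ σ ⊆ τ

/-- An elementary collapse removes from `Δ` all faces containing a free face. -/
def ElemCollapse {V : Type*} (Δ Γ : Set (Finset V)) : Prop :=
  ∃ σ : Finset V, IsFreeFace Δ σ ∧ Γ = {τ ∈ Δ | ¬ σ ⊆ τ}

/-- `Δ` collapses onto `Γ` if a (finite) sequence of elementary collapses
leads from `Δ` to `Γ`. -/
def CollapsesTo {V : Type*} (Δ Γ : Set (Finset V)) : Prop :=
  Relation.ReflTransGen ElemCollapse Δ Γ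

/-- `Δ` is collapsible if it collapses onto the void complex. -/
def Collapsible {V : Type*} (Δ : Set (Finset V)) : Prop :=
  CollapsesTo Δ (∅ : Set (Finset V))

/-- Euclidean space `ℝ^d`. -/
abbrev Euc (d : ℕ) : Type := EuclideanSpace ℝ (Fin d)

/-- `U` is a `d`-convex union representation of `Δ`: the `U i` are convex open
sets in `ℝ^d`, their union is convex, and their nerve is `Δ`. -/
def IsCURep {V : Type*} {d : ℕ} (U : V → Set (Euc d)) (Δ : Set (Finset V)) : Prop :=
  (∀ i, Convex ℝ (U i)) ∧ (∀ i, IsOpen (U i)) ∧ Convex ℝ (⋃ i, U i) ∧ nerveOf U = Δ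

/-- `Δ` is `d`-convex union representable. -/
def IsCUR {V : Type*} (d : ℕ) (Δ : Set (Finset V)) : Prop :=
  ∃ U : V → Set (Euc d), IsCURep U Δ

/-- `Δ` is convex union representable: `d`-convex union representable for some `d`. -/
def ConvexUnionRepresentable {V : Type*} (Δ : Set (Finset V)) : Prop :=
  ∃ d : ℕ, IsCUR d Δ

/-- `Δ` is `d`-representable: the nerve of a family of convex sets in `ℝ^d`. -/
def IsRep {V : Type*} (d : ℕ) (Δ : Set (Finset V)) : Prop :=
  ∃ U : V → Set (Euc d), (∀ i, Convex ℝ (U i)) ∧ nerveOf U = Δ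

/-- The Alexander dual of a complex `Δ` on ground set `Fin n`:
`Δ* = {σ ⊆ [n] : [n] ∖ σ ∉ Δ}`. -/
def alexDual {n : ℕ} (Δ : Set (Finset (Fin n))) : Set (Finset (Fin n)) :=
  {σ : Finset (Fin n) | σᶜ ∉ Δ}

/-!
Shrink the open convex sets to compact convex sets `V i` with the same nerve and a convex union.
For a non-face `σ`, the function `x ↦ max_{i ∈ σ} dist(x, V i)` is convex with positive minimum;
let `c σ` be its least-norm minimizer. Convexity of the union yields an index `g` with
`dist(c σ, V g)` below that minimum, and then `σ` and `σ ∆ {g}` have the same minimum and the same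
`c`. This pairs up the non-faces, and collapsing the pairs from the top value of
`(min, ‖c σ‖)` downwards collapses the full simplex onto `Δ`. Alexander duality reverses
elementary collapses and sends the full simplex to the void complex.
-/

section Collapses

variable {ι : Type*} {X Y : Set (Finset ι)} {σ F : Finset ι}

theorem isSimplicialComplex_univ : IsSimplicialComplex (Set.univ : Set (Finset ι)) :=
  fun _ _ _ _ => Set.mem_univ _

theorem ElemCollapse.isSimplicialComplex (hX : IsSimplicialComplex X) (h : ElemCollapse X Y) :
    IsSimplicialComplex Y := by
  obtain ⟨σ, -, rfl⟩ := h
  exact fun τ hτ η hητ => ⟨hX τ hτ.1 η hητ, fun hση => hτ.2 (hση.trans hητ)⟩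

theorem CollapsesTo.isSimplicialComplex (hX : IsSimplicialComplex X) (h : CollapsesTo X Y) :
    IsSimplicialComplex Y := by
  induction h with
  | refl => exact hX
  | tail _ hstep ih => exact hstep.isSimplicialComplex ih

theorem elemCollapse_of_cofaces_eq_Icc (hσF : σ ⊂ F)
    (hcof : ∀ τ, τ ∈ X ∧ σ ⊆ τ ↔ σ ⊆ τ ∧ τ ⊆ F) : ElemCollapse X {τ ∈ X | ¬σ ⊆ τ} := by
  have hF : IsFacet X F := by
    refine ⟨((hcof F).2 ⟨hσF.subset, subset_rfl⟩).1, fun τ hτ hFτ => ?_⟩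
    exact subset_antisymm ((hcof τ).1 ⟨hτ, hσF.subset.trans hFτ⟩).2 hFτ
  refine ⟨σ, ⟨((hcof σ).2 ⟨subset_rfl, hσF.subset⟩).1, ?_, F, ⟨hF, hσF.subset⟩, ?_⟩, rfl⟩
  · exact fun hσ => hσF.ne (hσ.2 F hF.1 hσF.subset).symm
  · rintro G ⟨hG, hσG⟩
    exact (hG.2 F hF.1 ((hcof G).1 ⟨hG.1, hσG⟩).2).symm

theorem Finset.eq_or_eq_insert_of_subset_of_subset_insert [DecidableEq ι] {s t : Finset ι} {a : ι}
    (hst : s ⊆ t) (hts : t ⊆ insert a s) : t = s ∨ t = insert a s := by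
  by_cases ha : a ∈ t
  · exact .inr (subset_antisymm hts (Finset.insert_subset ha hst))
  · exact .inl (subset_antisymm ((Finset.subset_insert_iff_of_notMem ha).1 hts) hst)

theorem elemCollapse_of_cofaces_eq_pair [DecidableEq ι] {a : ι} (ha : a ∉ σ) (hσ : σ ∈ X)
    (hins : insert a σ ∈ X) (hcof : ∀ τ ∈ X, σ ⊆ τ → τ = σ ∨ τ = insert a σ) :
    ElemCollapse X (X \ {σ, insert a σ}) := by
  convert elemCollapse_of_cofaces_eq_Icc (Finset.ssubset_insert ha) fun τ => ⟨?_, ?_⟩ using 1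
  · ext τ
    refine and_congr_right fun hτ => ⟨fun hpair hστ => hpair ?_, ?_⟩
    · exact (hcof τ hτ hστ).imp id Set.mem_singleton_iff.2
    · rintro hστ (rfl | h)
      exacts [hστ subset_rfl, hστ (Set.mem_singleton_iff.1 h ▸ Finset.subset_insert _ _)]
  · rintro ⟨hτ, hστ⟩
    rcases hcof τ hτ hστ with rfl | rfl
    exacts [⟨hστ, Finset.subset_insert _ _⟩, ⟨hστ, subset_rfl⟩]
  · rintro ⟨hστ, hτ⟩
    rcases Finset.eq_or_eq_insert_of_subset_of_subset_insert hστ hτ with rfl | rfl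
    exacts [⟨hσ, subset_rfl⟩, ⟨hins, hστ⟩]

theorem exists_isFacet_superset [Finite ι] {τ : Finset ι} (hτ : τ ∈ X) :
    ∃ F, IsFacet X F ∧ τ ⊆ F := by
  obtain ⟨F, hτF, hF⟩ := (Set.toFinite X).exists_le_maximal hτ
  exact ⟨F, ⟨hF.prop, fun G hG hFG => (hF.eq_of_le hG hFG).symm⟩, hτF⟩

theorem IsFreeFace.exists_cofaces_eq_Icc [Finite ι] (hX : IsSimplicialComplex X)
    (h : IsFreeFace X σ) : ∃ F, σ ⊂ F ∧ ∀ τ, τ ∈ X ∧ σ ⊆ τ ↔ σ ⊆ τ ∧ τ ⊆ F := by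
  obtain ⟨hσ, hnf, F, ⟨hF, hσF⟩, huniq⟩ := h
  refine ⟨F, hσF.ssubset_of_ne fun h => hnf (h ▸ hF), fun τ => ⟨?_, ?_⟩⟩
  · rintro ⟨hτ, hστ⟩
    obtain ⟨G, hG, hτG⟩ := exists_isFacet_superset hτ
    exact ⟨hστ, huniq G ⟨hG, hστ.trans hτG⟩ ▸ hτG⟩
  · exact fun ⟨hστ, hτF⟩ => ⟨hX F hF.1 τ hτF, hστ⟩

end Collapses

section AlexanderDual

variable {n : ℕ} {X Y : Set (Finset (Fin n))}

theorem alexDual_univ : alexDual (Set.univ : Set (Finset (Fin n))) = ∅ := by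
  ext σ
  simp [alexDual]

/-- Complementation turns the interval `[σ, F]` of cofaces of the free face `σ` of `X` into the
interval `[Fᶜ, σᶜ]` of cofaces of the free face `Fᶜ` of `alexDual Y`. -/
theorem ElemCollapse.alexDual (hX : IsSimplicialComplex X) (h : ElemCollapse X Y) :
    ElemCollapse (alexDual Y) (alexDual X) := by
  obtain ⟨σ, hσ, rfl⟩ := h
  obtain ⟨F, hσF, hcof⟩ := hσ.exists_cofaces_eq_Icc hX
  have hF : ∀ η, η ⊆ F → η ∈ X := fun η hη => hX F ((hcof F).2 ⟨hσF.subset, subset_rfl⟩).1 η hη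
  have hdual := elemCollapse_of_cofaces_eq_Icc (X := alexDual {τ ∈ X | ¬σ ⊆ τ})
    (Finset.compl_ssubset_compl.2 hσF) fun ζ => by
      have := hcof ζᶜ
      have := hF ζᶜ
      have : Fᶜ ⊆ ζ ↔ ζᶜ ⊆ F := compl_le_iff_compl_le
      have : ζ ⊆ σᶜ ↔ σ ⊆ ζᶜ := le_compl_comm
      simp only [_root_.alexDual, Set.mem_ofPred_eq] at *
      tauto
  convert hdual using 1
  ext ζ
  have := hcof ζᶜ
  have := hF ζᶜ
  have : Fᶜ ⊆ ζ ↔ ζᶜ ⊆ F := compl_le_iff_compl_le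
  simp only [_root_.alexDual, Set.mem_ofPred_eq] at *
  tauto

theorem CollapsesTo.alexDual (hX : IsSimplicialComplex X) (h : CollapsesTo X Y) :
    CollapsesTo (alexDual Y) (alexDual X) := by
  induction h with
  | refl => exact .refl
  | tail hXY hstep ih => exact .head (hstep.alexDual (CollapsesTo.isSimplicialComplex hX hXY)) ih

end AlexanderDual

section MorseMatching

open Finset
open scoped symmDiff

variable {ι α : Type*} [DecidableEq ι] [LinearOrder α]

theorem Finset.symmDiff_singleton_of_mem {s : Finset ι} {a : ι} (h : a ∈ s) :
    s ∆ {a} = s.erase a := by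
  ext; simp only [mem_symmDiff, mem_singleton, mem_erase]; grind

theorem Finset.symmDiff_singleton_of_notMem {s : Finset ι} {a : ι} (h : a ∉ s) :
    s ∆ {a} = insert a s := by
  ext; simp only [mem_symmDiff, mem_singleton, mem_insert]; grind

/-- Each `σ ∈ S` is matched with `σ ∆ {g σ}`. A key that is monotone on `S` and constant on matched
pairs makes the matching acyclic in the sense of discrete Morse theory. -/
structure IsMorseMatching (S : Set (Finset ι)) (key : Finset ι → α) (g : Finset ι → ι) :
    Prop where
  symmDiff_mem : ∀ σ ∈ S, σ ∆ {g σ} ∈ S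
  key_symmDiff : ∀ σ ∈ S, key (σ ∆ {g σ}) = key σ
  key_mono : ∀ σ ∈ S, ∀ τ ∈ S, σ ⊆ τ → key σ ≤ key τ
  eq_of_key_eq : ∀ σ ∈ S, ∀ τ ∈ S, σ ⊆ τ → key σ = key τ → g τ = g σ

namespace IsMorseMatching

variable {S : Set (Finset ι)} {key : Finset ι → α} {g : Finset ι → ι} {σ : Finset ι}

theorem g_symmDiff (hM : IsMorseMatching S key g) (hσ : σ ∈ S) : g (σ ∆ {g σ}) = g σ := by
  have hmem := hM.symmDiff_mem σ hσ
  have hkey := hM.key_symmDiff σ hσ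
  by_cases h : g σ ∈ σ
  · rw [symmDiff_singleton_of_mem h] at hmem hkey ⊢
    exact (hM.eq_of_key_eq _ hmem σ hσ (erase_subset _ _) hkey).symm
  · rw [symmDiff_singleton_of_notMem h] at hmem hkey ⊢
    exact hM.eq_of_key_eq σ hσ _ hmem (subset_insert _ _) hkey.symm

theorem symmDiff_symmDiff (hM : IsMorseMatching S key g) (hσ : σ ∈ S) :
    σ ∆ {g σ} ∆ {g (σ ∆ {g σ})} = σ := by
  rw [hM.g_symmDiff hσ, symmDiff_symmDiff_cancel_right]

theorem diff_pair (hM : IsMorseMatching S key g) (hσ : σ ∈ S) :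
    IsMorseMatching (S \ {σ, σ ∆ {g σ}}) key g where
  symmDiff_mem τ hτ := by
    refine ⟨hM.symmDiff_mem τ hτ.1, fun hpair => hτ.2 ?_⟩
    rw [← hM.symmDiff_symmDiff hτ.1]
    rcases hpair with h | h
    · exact .inr (h ▸ rfl)
    · exact .inl ((Set.mem_singleton_iff.1 h).symm ▸ hM.symmDiff_symmDiff hσ)
  key_symmDiff τ hτ := hM.key_symmDiff τ hτ.1
  key_mono τ hτ τ' hτ' := hM.key_mono τ hτ.1 τ' hτ'.1
  eq_of_key_eq τ hτ τ' hτ' := hM.eq_of_key_eq τ hτ.1 τ' hτ'.1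

/-- Among the faces of top key with `g σ ∉ σ`, one of largest cardinality has `insert (g σ) σ` as
its only proper coface in `S`. -/
theorem exists_free_pair [Finite ι] (hM : IsMorseMatching S key g) (hS : S.Nonempty) :
    ∃ σ ∈ S, g σ ∉ σ ∧ ∀ τ ∈ S, σ ⊆ τ → τ = σ ∨ τ = insert (g σ) σ := by
  obtain ⟨σ₁, hσ₁, hσ₁max⟩ := S.exists_max_image key (Set.toFinite S) hS
  set L := {σ ∈ S | key σ = key σ₁ ∧ g σ ∉ σ}
  have hL : L.Nonempty := by
    by_cases h : g σ₁ ∈ σ₁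
    · refine ⟨σ₁ ∆ {g σ₁}, hM.symmDiff_mem _ hσ₁, hM.key_symmDiff _ hσ₁, ?_⟩
      rw [hM.g_symmDiff hσ₁, symmDiff_singleton_of_mem h]
      exact notMem_erase _ _
    · exact ⟨σ₁, hσ₁, rfl, h⟩
  obtain ⟨σ, ⟨hσ, hkey, hgσ⟩, hσmax⟩ := L.exists_max_image card (Set.toFinite L) hL
  have hcof : ∀ τ ∈ S, σ ⊆ τ → key τ = key σ ∧ g τ = g σ := fun τ hτ hστ =>
    have hkτ := le_antisymm (hkey ▸ hσ₁max τ hτ) (hM.key_mono σ hσ τ hτ hστ)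
    ⟨hkτ, hM.eq_of_key_eq σ hσ τ hτ hστ hkτ.symm⟩
  have hLσ : ∀ τ ∈ L, σ ⊆ τ → τ = σ := fun τ hτ hστ =>
    (eq_of_subset_of_card_le hστ (hσmax τ hτ)).symm
  refine ⟨σ, hσ, hgσ, fun τ hτ hστ => ?_⟩
  obtain ⟨hkτ, hgτ⟩ := hcof τ hτ hστ
  by_cases hgστ : g σ ∈ τ
  · right
    have herase : τ ∆ {g τ} = τ.erase (g σ) := by rw [hgτ, symmDiff_singleton_of_mem hgστ]
    have : τ.erase (g σ) = σ := by
      refine hLσ _ ⟨herase ▸ hM.symmDiff_mem τ hτ, ?_, ?_⟩ (subset_erase.2 ⟨hστ, hgσ⟩)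
      · rw [← herase, hM.key_symmDiff τ hτ, hkτ, hkey]
      · rw [← herase, hM.g_symmDiff hτ, herase, hgτ]
        exact notMem_erase _ _
    nth_rw 1 [← insert_erase hgστ, this]
  · exact .inl (hLσ τ ⟨hτ, hkτ.trans hkey, hgτ ▸ hgστ⟩ hστ)

end IsMorseMatching

theorem collapsesTo_of_isMorseMatching [Finite ι] {Δ S : Set (Finset ι)} {key : Finset ι → α}
    {g : Finset ι → ι} (hΔ : IsSimplicialComplex Δ) (hSΔ : Disjoint S Δ)
    (hM : IsMorseMatching S key g) : CollapsesTo (Δ ∪ S) Δ := by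
  induction hk : S.ncard using Nat.strong_induction_on generalizing S with
  | _ k ih =>
  obtain rfl | hS := S.eq_empty_or_nonempty
  · rw [Set.union_empty]
    exact .refl
  obtain ⟨σ, hσ, hgσ, hcof⟩ := hM.exists_free_pair hS
  have hpair : σ ∆ {g σ} = insert (g σ) σ := symmDiff_singleton_of_notMem hgσ
  have hins : insert (g σ) σ ∈ S := hpair ▸ hM.symmDiff_mem σ hσ
  have hΔσ : ∀ τ ∈ Δ, ¬σ ⊆ τ := fun τ hτ hστ => hSΔ.notMem_of_mem_left hσ (hΔ τ hτ σ hστ)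
  have hstep := elemCollapse_of_cofaces_eq_pair (X := Δ ∪ S) hgσ (.inr hσ) (.inr hins)
    fun τ hτ hστ => hτ.elim (fun hτΔ => absurd hστ (hΔσ τ hτΔ)) (hcof τ · hστ)
  rw [Set.union_sdiff_distrib, sdiff_eq_left.2 (Set.disjoint_left.2 fun τ hτΔ hτ => ?_)] at hstep
  · refine .head hstep (ih _ ?_ (hSΔ.mono_left Set.sdiff_subset) (hpair ▸ hM.diff_pair hσ) rfl)
    rw [← hk]
    exact Set.ncard_lt_ncard (Set.sdiff_ssubset_left_iff.2 ⟨σ, hσ, .inl rfl⟩)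
  · rcases hτ with rfl | rfl
    exacts [hΔσ _ hτΔ subset_rfl, hΔσ _ hτΔ (subset_insert _ _)]

end MorseMatching

section Nerve

theorem isSimplicialComplex_nerveOf {ι E : Type*} (U : ι → Set E) :
    IsSimplicialComplex (nerveOf U) :=
  fun _ ⟨hU, x, hx⟩ _ hτσ => ⟨hU, x, fun i hi => hx i (hτσ hi)⟩

theorem mem_nerveOf_iff {ι E : Type*} {U : ι → Set E} (hU : ∃ i, (U i).Nonempty)
    {σ : Finset ι} : σ ∈ nerveOf U ↔ ∃ x, ∀ i ∈ σ, x ∈ U i :=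
  and_iff_right hU

theorem exists_mem_iUnion_of_mem_nerveOf {ι E : Type*} {U : ι → Set E} {σ : Finset ι}
    (hσ : σ ∈ nerveOf U) : ∃ x ∈ ⋃ i, U i, ∀ i ∈ σ, x ∈ U i := by
  obtain ⟨⟨j, y, hy⟩, x, hx⟩ := hσ
  obtain rfl | ⟨i, hi⟩ := σ.eq_empty_or_nonempty
  · exact ⟨y, Set.mem_iUnion_of_mem j hy, by simp⟩
  · exact ⟨x, Set.mem_iUnion_of_mem i (hx i hi), hx⟩

end Nerve

section Shrinking

open Metric Filter Topology

theorem isClosed_setOf_ball_subset {E : Type*} [PseudoMetricSpace E] (r : ℝ) (s : Set E) :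
    IsClosed {x | ball x r ⊆ s} := by
  convert (isOpen_thickening (δ := r) (E := sᶜ)).isClosed_compl
  ext x
  simp only [Set.mem_ofPred_eq, Set.mem_compl_iff, mem_thickening_iff, not_exists, not_and,
    Set.subset_def, mem_ball, dist_comm x]
  exact forall_congr' fun y => not_imp_not.symm

variable {ι E : Type*} [NormedAddCommGroup E] [NormedSpace ℝ E]

theorem Convex.setOf_ball_subset {s : Set E} (hs : Convex ℝ s) (r : ℝ) :
    Convex ℝ {x | ball x r ⊆ s} := by
  intro x hx y hy a b ha hb hab z hz
  set v := z - (a • x + b • y)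
  have hv : ‖v‖ < r := by rwa [mem_ball, dist_eq_norm] at hz
  have hz : z = a • (x + v) + b • (y + v) := by
    calc z = a • x + b • y + (a + b) • v := by rw [hab, one_smul, add_sub_cancel]
      _ = a • (x + v) + b • (y + v) := by module
  rw [hz]
  refine hs (hx ?_) (hy ?_) ha hb hab <;> rwa [mem_ball, dist_self_add_left]

theorem exists_isCompact_convex_nerveOf_eq [Finite ι] {U : ι → Set E}
    (hUconv : ∀ i, Convex ℝ (U i)) (hUopen : ∀ i, IsOpen (U i)) (hU : Convex ℝ (⋃ i, U i)) :
    ∃ V : ι → Set E, (∀ i, IsCompact (V i)) ∧ (∀ i, Convex ℝ (V i)) ∧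
      Convex ℝ (⋃ i, V i) ∧ nerveOf V = nerveOf U := by
  choose! w hwU hw using fun σ (hσ : σ ∈ nerveOf U) => exists_mem_iUnion_of_mem_nerveOf hσ
  set C := convexHull ℝ (w '' nerveOf U)
  have hCc : IsCompact C := ((Set.toFinite (nerveOf U)).image w).isCompact_convexHull ℝ
  have hCU : C ⊆ ⋃ i, U i := convexHull_min (Set.image_subset_iff.2 hwU) hU
  obtain ⟨δ, hδ, hleb⟩ := lebesgue_number_lemma_of_metric hCc hUopen hCU
  have hwit (σ : Finset ι) :
      ∀ᶠ r in 𝓝[>] (0 : ℝ), σ ∈ nerveOf U → ∀ i ∈ σ, ball (w σ) r ⊆ U i := by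
    by_cases hσ : σ ∈ nerveOf U
    · obtain ⟨ε, hε, hball⟩ := Metric.isOpen_iff.1 (isOpen_biInter_finset fun i _ => hUopen i)
        (w σ) (Set.mem_iInter₂.2 (hw σ hσ))
      filter_upwards [Ioo_mem_nhdsGT hε] with r hr _ i hi
      exact (ball_subset_ball hr.2.le).trans (hball.trans (Set.biInter_subset_of_mem hi))
    · exact .of_forall fun _ h => absurd h hσ
  obtain ⟨r, ⟨hr, hrδ⟩, hrw⟩ :=
    (Filter.Eventually.and (Ioo_mem_nhdsGT hδ) (eventually_all.2 hwit)).exists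
  let V i := C ∩ {x | ball x r ⊆ U i}
  have hVU (i : ι) : V i ⊆ U i := fun x hx => hx.2 (mem_ball_self hr)
  have hunion : ⋃ i, V i = C := by
    refine subset_antisymm (Set.iUnion_subset fun i => Set.inter_subset_left) fun x hx => ?_
    obtain ⟨i, hi⟩ := hleb x hx
    exact Set.mem_iUnion_of_mem i ⟨hx, (ball_subset_ball hrδ.le).trans hi⟩
  refine ⟨V, fun i => hCc.inter_right (isClosed_setOf_ball_subset _ _),
    fun i => (convex_convexHull ℝ _).inter ((hUconv i).setOf_ball_subset r),
    hunion ▸ convex_convexHull ℝ _, Set.ext fun σ => ⟨?_, fun hσ => ?_⟩⟩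
  · rintro ⟨⟨i, x, hx⟩, y, hy⟩
    exact ⟨⟨i, x, hVU i hx⟩, y, fun i hi => hVU i (hy i hi)⟩
  · have hwC : w σ ∈ C := subset_convexHull ℝ _ (Set.mem_image_of_mem w hσ)
    obtain ⟨i, hi⟩ := Set.mem_iUnion.1 (hunion.symm ▸ hwC : w σ ∈ ⋃ i, V i)
    exact ⟨⟨i, w σ, hi⟩, w σ, fun j hj => ⟨hwC, hrw σ hσ j hj⟩⟩

end Shrinking

section MaxInfDist

open Metric Filter Topology
open scoped NNReal symmDiff

variable {ι E : Type*} [PseudoMetricSpace E] {V : ι → Set E} {σ τ : Finset ι} {x : E} {g : ι}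

noncomputable def maxInfDist (V : ι → Set E) (σ : Finset ι) (x : E) : ℝ :=
  ((σ.sup fun i => infNndist x (V i) : ℝ≥0) : ℝ)

@[simp]
theorem maxInfDist_empty : maxInfDist V ∅ x = 0 := by
  simp [maxInfDist]

theorem maxInfDist_insert [DecidableEq ι] :
    maxInfDist V (insert g σ) x = max (infDist x (V g)) (maxInfDist V σ x) := by
  simp [maxInfDist, Finset.sup_insert, coe_infNndist]

theorem maxInfDist_nonneg : 0 ≤ maxInfDist V σ x :=
  NNReal.coe_nonneg _

theorem maxInfDist_le_iff {r : ℝ} (hr : 0 ≤ r) :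
    maxInfDist V σ x ≤ r ↔ ∀ i ∈ σ, infDist x (V i) ≤ r := by
  lift r to ℝ≥0 using hr
  simp [maxInfDist, ← coe_infNndist, Finset.sup_le_iff]

theorem infDist_le_maxInfDist (hg : g ∈ σ) : infDist x (V g) ≤ maxInfDist V σ x :=
  (maxInfDist_le_iff maxInfDist_nonneg).1 le_rfl g hg

theorem maxInfDist_mono (hστ : σ ⊆ τ) : maxInfDist V σ x ≤ maxInfDist V τ x :=
  NNReal.coe_le_coe.2 (Finset.sup_mono hστ)

theorem maxInfDist_eq_zero_iff (hVcl : ∀ i, IsClosed (V i)) (hVne : ∀ i, (V i).Nonempty) :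
    maxInfDist V σ x = 0 ↔ ∀ i ∈ σ, x ∈ V i := by
  rw [← maxInfDist_nonneg.ge_iff_eq', maxInfDist_le_iff le_rfl]
  refine forall₂_congr fun i _ => ?_
  rw [(hVcl i).mem_iff_infDist_zero (hVne i), ← infDist_nonneg.ge_iff_eq']

theorem infDist_lt_maxInfDist_erase [DecidableEq ι]
    (hg : infDist x (V g) < maxInfDist V σ x) :
    infDist x (V g) < maxInfDist V (σ.erase g) x := by
  have := hg.trans_le (maxInfDist_mono (Finset.insert_erase_subset g σ))
  rwa [maxInfDist_insert, lt_max_iff, lt_self_iff_false, false_or] at this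

theorem maxInfDist_insert_of_infDist_lt [DecidableEq ι]
    (hg : infDist x (V g) < maxInfDist V σ x) :
    maxInfDist V (insert g σ) x = maxInfDist V σ x := by
  rw [maxInfDist_insert, max_eq_right hg.le]

theorem maxInfDist_symmDiff_singleton [DecidableEq ι] (hg : infDist x (V g) < maxInfDist V σ x) :
    maxInfDist V (σ ∆ {g}) x = maxInfDist V σ x := by
  by_cases hgσ : g ∈ σ
  · have := maxInfDist_insert_of_infDist_lt (infDist_lt_maxInfDist_erase hg)
    rw [Finset.insert_erase hgσ] at this
    rw [Finset.symmDiff_singleton_of_mem hgσ, this]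
  · rw [Finset.symmDiff_singleton_of_notMem hgσ, maxInfDist_insert_of_infDist_lt hg]

theorem continuous_maxInfDist : Continuous (maxInfDist V σ) := by
  classical
  induction σ using Finset.induction_on with
  | empty => exact (funext fun _ => maxInfDist_empty : maxInfDist V ∅ = 0) ▸ continuous_const
  | insert g σ _ ih =>
    rw [show maxInfDist V (insert g σ) = fun x => max (infDist x (V g)) (maxInfDist V σ x) from
      funext fun _ => maxInfDist_insert]
    exact (continuous_infDist_pt (V g)).max ih

theorem tendsto_maxInfDist_cocompact [ProperSpace E] (hσ : σ.Nonempty)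
    (hVb : ∀ i, Bornology.IsBounded (V i)) (hVne : ∀ i, (V i).Nonempty) :
    Tendsto (maxInfDist V σ) (cocompact E) atTop := by
  obtain ⟨i, hi⟩ := hσ
  obtain ⟨v, hv⟩ := hVne i
  refine tendsto_atTop_mono (fun x => ?_)
    (tendsto_atTop_add_const_right _ (-diam (V i)) (tendsto_dist_right_cocompact_atTop v))
  linarith [dist_le_infDist_add_diam (x := x) (hVb i) hv,
    infDist_le_maxInfDist (V := V) (x := x) hi]

end MaxInfDist

section Convexity

open Metric

variable {ι E : Type*} [NormedAddCommGroup E] [NormedSpace ℝ E] {V : ι → Set E} {σ : Finset ι}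

theorem convexOn_infDist {s : Set E} (hs : Convex ℝ s) : ConvexOn ℝ Set.univ (infDist · s) := by
  obtain rfl | hne := s.eq_empty_or_nonempty
  · simpa only [infDist_empty] using convexOn_const (0 : ℝ) (convex_univ (𝕜 := ℝ) (E := E))
  refine ⟨convex_univ, fun x _ y _ a b ha hb hab => le_of_forall_pos_le_add fun ε hε => ?_⟩
  obtain ⟨u, hu, hxu⟩ := (infDist_lt_iff hne).1 (lt_add_of_pos_right (infDist x s) hε)
  obtain ⟨v, hv, hyv⟩ := (infDist_lt_iff hne).1 (lt_add_of_pos_right (infDist y s) hε)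
  calc infDist (a • x + b • y) s
      ≤ dist (a • x + b • y) (a • u + b • v) := infDist_le_dist_of_mem (hs hu hv ha hb hab)
    _ ≤ a * dist x u + b * dist y v := by
      refine (dist_add_add_le _ _ _ _).trans_eq ?_
      rw [dist_smul₀, dist_smul₀, Real.norm_of_nonneg ha, Real.norm_of_nonneg hb]
    _ ≤ a * (infDist x s + ε) + b * (infDist y s + ε) := by
      gcongr
    _ = a • infDist x s + b • infDist y s + ε := by
      rw [smul_eq_mul, smul_eq_mul]
      linear_combination ε * hab

theorem convexOn_maxInfDist (hV : ∀ i, Convex ℝ (V i)) :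
    ConvexOn ℝ Set.univ (maxInfDist V σ) := by
  classical
  induction σ using Finset.induction_on with
  | empty =>
    exact (funext fun _ => maxInfDist_empty : maxInfDist V ∅ = 0) ▸ convexOn_const 0 convex_univ
  | insert g σ _ ih =>
    rw [show maxInfDist V (insert g σ) = (infDist · (V g)) ⊔ maxInfDist V σ from
      funext fun _ => maxInfDist_insert]
    exact (convexOn_infDist (hV g)).sup ih

end Convexity

section Center

open Metric Filter Topology Finset
open scoped symmDiff

variable {ι E : Type*} [NormedAddCommGroup E] {V : ι → Set E} {σ τ : Finset ι} {c d : E} {g : ι}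

def IsCenter (V : ι → Set E) (σ : Finset ι) (c : E) : Prop :=
  (∀ x, maxInfDist V σ c ≤ maxInfDist V σ x) ∧
    ∀ x, maxInfDist V σ x ≤ maxInfDist V σ c → ‖c‖ ≤ ‖x‖

theorem exists_isCenter [ProperSpace E] (hVc : ∀ i, IsCompact (V i))
    (hVne : ∀ i, (V i).Nonempty) : ∃ c, IsCenter V σ c := by
  obtain ⟨c₀, hc₀⟩ : ∃ c₀, ∀ x, maxInfDist V σ c₀ ≤ maxInfDist V σ x := by
    obtain rfl | hσ := σ.eq_empty_or_nonempty
    · exact ⟨0, fun x => by simp⟩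
    exact continuous_maxInfDist.exists_forall_le
      (tendsto_maxInfDist_cocompact hσ (fun i => (hVc i).isBounded) hVne)
  let A := {x | maxInfDist V σ x ≤ maxInfDist V σ c₀}
  have hA : IsClosed A := isClosed_le continuous_maxInfDist continuous_const
  obtain ⟨c, hc, hdist⟩ := hA.exists_infDist_eq_dist ⟨c₀, le_refl (maxInfDist V σ c₀)⟩ 0
  have hcc₀ : maxInfDist V σ c = maxInfDist V σ c₀ := le_antisymm hc (hc₀ c)
  refine ⟨c, fun x => hcc₀ ▸ hc₀ x, fun x hx => ?_⟩
  have hxA : x ∈ A := show maxInfDist V σ x ≤ _ from hcc₀ ▸ hx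
  calc ‖c‖ = infDist 0 A := by rw [hdist, dist_zero_left]
    _ ≤ ‖x‖ := dist_zero_left x ▸ infDist_le_dist_of_mem hxA

noncomputable def center (V : ι → Set E) (σ : Finset ι) : E :=
  Classical.epsilon (IsCenter V σ)

noncomputable def centerKey (V : ι → Set E) (σ : Finset ι) : ℝ ×ₗ ℝ :=
  toLex (maxInfDist V σ (center V σ), ‖center V σ‖)

noncomputable def escapeIndex [Nonempty ι] (V : ι → Set E) (σ : Finset ι) : ι :=
  Classical.epsilon fun g => infDist (center V σ) (V g) < maxInfDist V σ (center V σ)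

theorem isCenter_center [ProperSpace E] (hVc : ∀ i, IsCompact (V i)) (hVne : ∀ i, (V i).Nonempty) :
    IsCenter V σ (center V σ) :=
  Classical.epsilon_spec (exists_isCenter hVc hVne)

theorem IsCenter.exists_mem_iff (hVcl : ∀ i, IsClosed (V i)) (hVne : ∀ i, (V i).Nonempty)
    (hc : IsCenter V σ c) : (∃ p, ∀ i ∈ σ, p ∈ V i) ↔ maxInfDist V σ c = 0 := by
  refine ⟨fun ⟨p, hp⟩ => le_antisymm ?_ maxInfDist_nonneg,
    fun h => ⟨c, (maxInfDist_eq_zero_iff hVcl hVne).1 h⟩⟩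
  exact (hc.1 p).trans ((maxInfDist_eq_zero_iff hVcl hVne).2 hp).le

theorem IsCenter.toLex_le (hc : IsCenter V σ c) (hστ : σ ⊆ τ) (d : E) :
    toLex (maxInfDist V σ c, ‖c‖) ≤ toLex (maxInfDist V τ d, ‖d‖) :=
  Prod.Lex.toLex_le_toLex'.2 ⟨(hc.1 d).trans (maxInfDist_mono hστ),
    fun hval => hc.2 d ((maxInfDist_mono hστ).trans hval.ge)⟩

variable [NormedSpace ℝ E]

theorem IsCenter.eq [StrictConvexSpace ℝ E] (hV : ∀ i, Convex ℝ (V i)) (hc : IsCenter V σ c)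
    (hd : IsCenter V σ d) : c = d := by
  have hcd : maxInfDist V σ d = maxInfDist V σ c := le_antisymm (hd.1 c) (hc.1 d)
  have hnorm : ‖c‖ = ‖d‖ := le_antisymm (hc.2 d hcd.le) (hd.2 c hcd.ge)
  by_contra hne
  have hmid := (convexOn_maxInfDist hV).convex_le (maxInfDist V σ c) ⟨Set.mem_univ c, le_rfl⟩
    ⟨Set.mem_univ d, hcd.le⟩ (by norm_num : (0 : ℝ) ≤ 1 / 2) (by norm_num : (0 : ℝ) ≤ 1 / 2)
    (by norm_num)
  rw [← smul_add] at hmid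
  exact ((norm_midpoint_lt_iff hnorm).2 hne).not_ge (hc.2 _ hmid.2)

theorem IsCenter.eq_of_toLex_eq [StrictConvexSpace ℝ E] (hV : ∀ i, Convex ℝ (V i))
    (hc : IsCenter V σ c) (hστ : σ ⊆ τ)
    (h : toLex (maxInfDist V σ c, ‖c‖) = toLex (maxInfDist V τ d, ‖d‖)) : c = d := by
  obtain ⟨hval, hnorm⟩ : maxInfDist V σ c = maxInfDist V τ d ∧ ‖c‖ = ‖d‖ :=
    Prod.ext_iff.1 (toLex.injective h)
  have hdσ : maxInfDist V σ d ≤ maxInfDist V σ c := (maxInfDist_mono hστ).trans hval.ge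
  exact hc.eq hV ⟨fun x => hdσ.trans (hc.1 x), fun x hx => hnorm ▸ hc.2 x (hx.trans hdσ)⟩

/-- Near `c` the set `V g` is farther than `maxInfDist V σ c`, so adding `g` to `σ` changes neither
`maxInfDist` nor its sublevel sets near `c`; by convexity, local minimality is global. -/
theorem isCenter_insert_iff [DecidableEq ι] (hV : ∀ i, Convex ℝ (V i))
    (hg : infDist c (V g) < maxInfDist V σ c) :
    IsCenter V (insert g σ) c ↔ IsCenter V σ c := by
  have hnear : ∀ᶠ x in 𝓝 c, infDist x (V g) < maxInfDist V σ c :=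
    (continuous_infDist_pt (V g)).continuousAt.eventually_lt continuousAt_const hg
  simp only [IsCenter, maxInfDist_insert_of_infDist_lt hg]
  constructor
  · rintro ⟨hmin, hnorm⟩
    have hlocal : IsLocalMin (maxInfDist V σ) c := hnear.mono fun x hx => by
      have := hmin x
      rwa [maxInfDist_insert, le_max_iff, or_iff_right hx.not_ge] at this
    have hlocal_norm : IsLocalMinOn norm {x | maxInfDist V σ x ≤ maxInfDist V σ c} c := by
      filter_upwards [nhdsWithin_le_nhds hnear, self_mem_nhdsWithin] with x hx hxσ
      exact hnorm x (maxInfDist_insert (V := V) ▸ max_le hx.le hxσ)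
    have hconv : Convex ℝ {x | maxInfDist V σ x ≤ maxInfDist V σ c} := by
      simpa using (convexOn_maxInfDist hV).convex_le (maxInfDist V σ c)
    exact ⟨IsMinOn.of_isLocalMin_of_convex_univ hlocal (convexOn_maxInfDist hV),
      fun x hx => isMinOn_iff.1 (IsMinOn.of_isLocalMinOn_of_convexOn (a := c)
        (le_refl (maxInfDist V σ c)) hlocal_norm (convexOn_norm hconv)) x hx⟩
  · rintro ⟨hmin, hnorm⟩
    exact ⟨fun x => (hmin x).trans (maxInfDist_mono (subset_insert g σ)),
      fun x hx => hnorm x ((maxInfDist_mono (subset_insert g σ)).trans hx)⟩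

theorem isCenter_symmDiff_singleton_iff [DecidableEq ι] (hV : ∀ i, Convex ℝ (V i))
    (hg : infDist c (V g) < maxInfDist V σ c) :
    IsCenter V (σ ∆ {g}) c ↔ IsCenter V σ c := by
  by_cases hgσ : g ∈ σ
  · have := isCenter_insert_iff hV (infDist_lt_maxInfDist_erase hg)
    rw [insert_erase hgσ] at this
    rw [symmDiff_singleton_of_mem hgσ, this]
  · rw [symmDiff_singleton_of_notMem hgσ, isCenter_insert_iff hV hg]

end Center

section NerveCollapse

open Metric Finset
open scoped symmDiff

variable {ι E : Type*} [NormedAddCommGroup E] [NormedSpace ℝ E] [StrictConvexSpace ℝ E]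
  {V : ι → Set E} {σ : Finset ι}

/-- If every `V g` were at distance at least `r = maxInfDist V σ x` from `x`, the nearest points
of the `V i`, `i ∈ σ`, would all coincide: two distinct ones would have a midpoint in `⋃ i, V i`
strictly closer than `r` to `x`. -/
theorem exists_infDist_lt_maxInfDist (hVc : ∀ i, IsCompact (V i)) (hVne : ∀ i, (V i).Nonempty)
    (hV : Convex ℝ (⋃ i, V i)) (hσ : ¬∃ p, ∀ i ∈ σ, p ∈ V i) (x : E) :
    ∃ g, infDist x (V g) < maxInfDist V σ x := by
  by_contra! hfar
  set r := maxInfDist V σ x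
  have hnearest : ∀ i ∈ σ, ∃ p ∈ V i, dist x p = r := fun i hi => by
    obtain ⟨p, hp, hdist⟩ := (hVc i).exists_infDist_eq_dist (hVne i) x
    exact ⟨p, hp, hdist ▸ le_antisymm (infDist_le_maxInfDist hi) (hfar i)⟩
  have hunique : ∀ p ∈ ⋃ i, V i, ∀ p' ∈ ⋃ i, V i, dist x p = r → dist x p' = r → p = p' := by
    intro p hp p' hp' hd hd'
    by_contra hne
    obtain ⟨j, hj⟩ := Set.mem_iUnion.1 (hV hp hp' (by norm_num : (0 : ℝ) ≤ 1 / 2)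
      (by norm_num : (0 : ℝ) ≤ 1 / 2) (by norm_num))
    have hmid : x - ((1 / 2 : ℝ) • p + (1 / 2 : ℝ) • p') = (1 / 2 : ℝ) • ((x - p) + (x - p')) := by
      module
    have hlt := (norm_midpoint_lt_iff (x := x - p) (y := x - p')
      (by rw [← dist_eq_norm, ← dist_eq_norm, hd, hd'])).2 (by simpa using hne)
    have hfar_j := (hfar j).trans (infDist_le_dist_of_mem hj)
    rw [dist_eq_norm, hmid] at hfar_j
    rw [← dist_eq_norm, hd] at hlt
    exact hlt.not_ge hfar_j
  obtain rfl | ⟨i₀, hi₀⟩ := σ.eq_empty_or_nonempty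
  · exact hσ ⟨x, by simp⟩
  obtain ⟨p₀, hp₀, hd₀⟩ := hnearest i₀ hi₀
  refine hσ ⟨p₀, fun i hi => ?_⟩
  obtain ⟨p, hp, hd⟩ := hnearest i hi
  rwa [← hunique p (Set.mem_iUnion_of_mem i hp) p₀ (Set.mem_iUnion_of_mem i₀ hp₀) hd hd₀]

variable [ProperSpace E]

theorem isMorseMatching_escapeIndex [Nonempty ι] [DecidableEq ι] (hVc : ∀ i, IsCompact (V i))
    (hVconv : ∀ i, Convex ℝ (V i)) (hVne : ∀ i, (V i).Nonempty) (hV : Convex ℝ (⋃ i, V i)) :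
    IsMorseMatching (nerveOf V)ᶜ (centerKey V) (escapeIndex V) := by
  have hnerve (σ : Finset ι) : σ ∈ nerveOf V ↔ ∃ p, ∀ i ∈ σ, p ∈ V i :=
    mem_nerveOf_iff ⟨Classical.arbitrary ι, hVne _⟩
  have hcenter (σ : Finset ι) : IsCenter V σ (center V σ) := isCenter_center hVc hVne
  have hzero (σ : Finset ι) : σ ∈ nerveOf V ↔ maxInfDist V σ (center V σ) = 0 := by
    rw [hnerve, (hcenter σ).exists_mem_iff (fun i => (hVc i).isClosed) hVne]
  have hflip (σ : Finset ι) (hσ : σ ∉ nerveOf V) :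
      center V (σ ∆ {escapeIndex V σ}) = center V σ ∧
        maxInfDist V (σ ∆ {escapeIndex V σ}) (center V σ) = maxInfDist V σ (center V σ) := by
    have hg : infDist (center V σ) (V (escapeIndex V σ)) < maxInfDist V σ (center V σ) :=
      Classical.epsilon_spec (exists_infDist_lt_maxInfDist hVc hVne hV ((hnerve σ).not.1 hσ) _)
    exact ⟨(hcenter _).eq hVconv ((isCenter_symmDiff_singleton_iff hVconv hg).2 (hcenter σ)),
      maxInfDist_symmDiff_singleton hg⟩
  refine ⟨fun σ hσ => ?_, fun σ hσ => ?_, fun σ _ τ _ hστ => (hcenter σ).toLex_le hστ _,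
    fun σ _ τ _ hστ h => ?_⟩
  · obtain ⟨hc, hval⟩ := hflip σ hσ
    rwa [Set.mem_compl_iff, hzero, hc, hval, ← hzero]
  · obtain ⟨hc, hval⟩ := hflip σ hσ
    rw [centerKey, centerKey, hc, hval]
  · have hc := (hcenter σ).eq_of_toLex_eq hVconv hστ h
    have hval := congrArg (fun k => (ofLex k).1) h
    simp only [centerKey, ofLex_toLex] at hval
    rw [escapeIndex, escapeIndex, ← hval, ← hc]

theorem collapsesTo_nerveOf [Finite ι] [Nonempty ι] (hVc : ∀ i, IsCompact (V i))
    (hVconv : ∀ i, Convex ℝ (V i)) (hVne : ∀ i, (V i).Nonempty) (hV : Convex ℝ (⋃ i, V i)) :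
    CollapsesTo Set.univ (nerveOf V) := by
  classical
  simpa using collapsesTo_of_isMorseMatching (isSimplicialComplex_nerveOf V) disjoint_compl_left
    (isMorseMatching_escapeIndex hVc hVconv hVne hV)

end NerveCollapse

theorem alexDual_collapsible_of_CUR_general {n : ℕ} (hn : 1 ≤ n)
    (Δ : Set (Finset (Fin n)))
    (hvert : ∀ i : Fin n, ({i} : Finset (Fin n)) ∈ Δ)
    (hcur : ConvexUnionRepresentable Δ) :
    Collapsible (alexDual Δ) := by
  obtain ⟨d, U, hUconv, hUopen, hU, rfl⟩ := hcur
  obtain ⟨V, hVc, hVconv, hV, hVU⟩ := exists_isCompact_convex_nerveOf_eq hUconv hUopen hU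
  rw [← hVU] at hvert ⊢
  have : Nonempty (Fin n) := ⟨⟨0, hn⟩⟩
  have hVne (i : Fin n) : (V i).Nonempty := by
    obtain ⟨x, hx⟩ := (hvert i).2
    exact ⟨x, hx i (Finset.mem_singleton_self i)⟩
  have hfull := (collapsesTo_nerveOf hVc hVconv hVne hV).alexDual isSimplicialComplex_univ
  rwa [alexDual_univ] at hfull

/-- **Theorem.** The Alexander dual of a convex union representable complex
with `n ≥ 1` vertices is collapsible. -/
theorem alexDual_collapsible_of_CUR {n : ℕ} (hn : 1 ≤ n)
    (Δ : Set (Finset (Fin n))) (hΔ : IsSimplicialComplex Δ)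
    (hvert : ∀ i : Fin n, ({i} : Finset (Fin n)) ∈ Δ)
    (hcur : ConvexUnionRepresentable Δ) :
    Collapsible (alexDual Δ) :=
  alexDual_collapsible_of_CUR_general hn Δ hvert hcur
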